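/- arXiv:1803.10809 — 7 statements merged into one kernel-verified Lean document; each statement's English description precedes it below -/
import Mathlib

section
/- For a > 0 and r > 0, if a₀ = 2r·tanh(a/(2r))/√(1 + (1/2)·tanh²(a/(2r))), then a = 2r·artanh((a₀/2)/√(r² − a₀²/8)) and a₀ < (2/3)·√6·r. -/
/-!
Put `t = tanh (a / (2r))` and `s = √(1 + t² / 2)`, so that `a₀ = 2rt / s`. Then
`r² - a₀² / 8 = r² (1 + t²/2 - t²/2) / s² = (r / s)²`, hence `(a₀ / 2) / √(r² - a₀² / 8) = t`,
and applying `artanh` recovers `a / (2r)`. The bound is `a₀² = 8r² t² / (2 + t²) < 8r² / 3`,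
which is `t² < 1`.
-/

/-- The inverse hyperbolic tangent, `artanh x = (1/2) * log ((1+x)/(1-x))`. -/
noncomputable def artanh (x : ℝ) : ℝ := (1 / 2) * Real.log ((1 + x) / (1 - x))

theorem artanh_eq_real_artanh {x : ℝ} (hx : x ∈ Set.Icc (-1) 1) : artanh x = Real.artanh x :=
  (Real.artanh_eq_half_log hx).symm

theorem artanh_tanh (x : ℝ) : artanh (Real.tanh x) = x := by
  rw [artanh_eq_real_artanh ⟨(Real.neg_one_lt_tanh x).le, (Real.tanh_lt_one x).le⟩, Real.artanh_tanh]

section KleinEdge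

variable {r : ℝ} (t : ℝ)

theorem sqrt_sub_sq_div_eight (hr : 0 < r) :
    √(r ^ 2 - (2 * r * t / √(1 + 1 / 2 * t ^ 2)) ^ 2 / 8) = r / √(1 + 1 / 2 * t ^ 2) := by
  have hs : (0 : ℝ) < 1 + 1 / 2 * t ^ 2 := by positivity
  rw [← Real.sqrt_sq (by positivity : 0 ≤ r / √(1 + 1 / 2 * t ^ 2))]
  congr 1
  rw [div_pow, div_pow, Real.sq_sqrt hs.le]
  field_simp
  ring

theorem half_div_sqrt_sub_sq_div_eight (hr : 0 < r) :
    (2 * r * t / √(1 + 1 / 2 * t ^ 2) / 2) /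
      √(r ^ 2 - (2 * r * t / √(1 + 1 / 2 * t ^ 2)) ^ 2 / 8) = t := by
  have hs : 0 < √(1 + 1 / 2 * t ^ 2) := Real.sqrt_pos.mpr (by positivity)
  rw [sqrt_sub_sq_div_eight t hr]
  field_simp

variable {t}

theorem two_mul_mul_div_sqrt_lt_of_sq_lt_one (hr : 0 < r) (ht : t ^ 2 < 1) :
    2 * r * t / √(1 + 1 / 2 * t ^ 2) < 2 / 3 * √6 * r := by
  have hs : (0 : ℝ) < 1 + 1 / 2 * t ^ 2 := by positivity
  refine lt_of_pow_lt_pow_left₀ 2 (by positivity) ?_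
  have hbound : (2 / 3 * √6 * r) ^ 2 = 8 / 3 * r ^ 2 := by
    rw [mul_pow, mul_pow, Real.sq_sqrt (by norm_num)]
    ring
  rw [hbound, div_pow, Real.sq_sqrt hs.le, div_lt_iff₀ hs]
  nlinarith [mul_pos (pow_pos hr 2) (sub_pos.mpr ht)]

end KleinEdge

theorem stmt_2_general (a r a₀ : ℝ) (hr : 0 < r)
    (ha₀ : a₀ = 2 * r * Real.tanh (a / (2 * r)) /
      Real.sqrt (1 + (1 / 2) * Real.tanh (a / (2 * r)) ^ 2)) :
    a = 2 * r * artanh ((a₀ / 2) / Real.sqrt (r ^ 2 - a₀ ^ 2 / 8)) ∧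
    a₀ < (2 / 3) * Real.sqrt 6 * r := by
  subst ha₀
  refine ⟨?_, two_mul_mul_div_sqrt_lt_of_sq_lt_one hr (Real.tanh_sq_lt_one _)⟩
  rw [half_div_sqrt_sub_sq_div_eight _ hr, artanh_tanh]
  field_simp

theorem stmt_2 (a r a₀ : ℝ) (ha : 0 < a) (hr : 0 < r)
    (ha₀ : a₀ = 2 * r * Real.tanh (a / (2 * r)) /
      Real.sqrt (1 + (1 / 2) * Real.tanh (a / (2 * r)) ^ 2)) :
    a = 2 * r * artanh ((a₀ / 2) / Real.sqrt (r ^ 2 - a₀ ^ 2 / 8)) ∧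
    a₀ < (2 / 3) * Real.sqrt 6 * r :=
  stmt_2_general a r a₀ hr ha₀
end

section
/- For any fixed a > 0, the limit as r → ∞ of r²·(3·arccos(cos(a/r)/(cos(a/r)+1)) − π) equals (√3/4)·a². -/
/-!
Write `F x = 3 arccos (cos x / (cos x + 1)) - π`. The map `c ↦ 3 arccos (c / (c + 1))` takes
the value `π` at `c = 1` with derivative `-√3 / 2` there, and `cos x - 1 = -x² / 2 + O(x⁴)`,
so `F x = (√3 / 4) x² + o(x²)` as `x → 0`. Substituting `x = a / r` turns the `o(x²)` error
into `r² · o(a² / r²) → 0`.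
-/

open Real Filter Topology Asymptotics

lemma arccos_one_half : arccos (1 / 2) = π / 3 := by
  rw [← cos_pi_div_three, arccos_cos (by positivity) (by linarith [pi_pos])]

lemma hasDerivAt_arccos_div_add_one :
    HasDerivAt (fun c => arccos (c / (c + 1))) (-(√3 / 6)) 1 := by
  have hquot : HasDerivAt (fun c : ℝ => c / (c + 1)) (1 / 4) 1 :=
    ((hasDerivAt_id' 1).div ((hasDerivAt_id' 1).add_const 1) (by norm_num)).congr_deriv
      (by norm_num)
  have harccos := hasDerivAt_arccos (x := 1 / (1 + 1)) (by norm_num) (by norm_num)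
  refine (harccos.comp 1 hquot).congr_deriv ?_
  have hsqrt : √(1 - (1 / (1 + 1)) ^ 2 : ℝ) = √3 / 2 := by
    rw [show (1 - (1 / (1 + 1)) ^ 2 : ℝ) = 3 / 2 ^ 2 by norm_num, sqrt_div' _ (by positivity),
      sqrt_sq (by norm_num)]
  have h3 : √3 * √3 = 3 := mul_self_sqrt (by norm_num)
  rw [hsqrt]
  field_simp
  linarith

lemma cos_sub_one_add_sq_div_two_isLittleO :
    (fun x => cos x - 1 + x ^ 2 / 2) =o[𝓝 0] fun x => x ^ 2 := by
  have hbound : (fun x => cos x - 1 + x ^ 2 / 2) =O[𝓝 0] fun x => x ^ 4 := by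
    refine IsBigO.of_bound (5 / 96) ?_
    filter_upwards [Metric.closedBall_mem_nhds (0 : ℝ) one_pos] with x hx
    have := cos_bound (x := x) (by simpa using hx)
    rw [norm_eq_abs, norm_eq_abs, abs_pow, mul_comm]
    convert this using 2
    ring
  exact hbound.trans_isLittleO (isLittleO_pow_pow (by norm_num))

lemma cos_sub_one_isBigO : (fun x => cos x - 1) =O[𝓝 0] fun x => x ^ 2 :=
  (cos_sub_one_add_sq_div_two_isLittleO.isBigO.sub ((isBigO_refl _ _).const_mul_left (1 / 2))).congr
    (fun x => by ring) fun _ => rfl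

lemma arccos_cos_div_cos_add_one_isLittleO :
    (fun x => 3 * arccos (cos x / (cos x + 1)) - π - √3 / 4 * x ^ 2) =o[𝓝 0]
      fun x => x ^ 2 := by
  have hcos : Tendsto cos (𝓝 0) (𝓝 1) := cos_zero ▸ continuous_cos.tendsto 0
  have hfirst := (hasDerivAt_iff_isLittleO.mp hasDerivAt_arccos_div_add_one).comp_tendsto hcos
  have hA := (hfirst.trans_isBigO cos_sub_one_isBigO).const_mul_left 3
  have hB := cos_sub_one_add_sq_div_two_isLittleO.const_mul_left (√3 / 2)
  refine (hA.sub hB).congr (fun x => ?_) fun _ => rfl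
  simp only [Function.comp, smul_eq_mul]
  rw [show (1 : ℝ) / (1 + 1) = 1 / 2 by norm_num, arccos_one_half]
  ring

lemma tendsto_sq_mul_comp_div_atTop {g : ℝ → ℝ} (hg : g =o[𝓝 0] fun x => x ^ 2) (a : ℝ) :
    Tendsto (fun r => r ^ 2 * g (a / r)) atTop (𝓝 0) := by
  have hdiv : Tendsto (fun r => a / r) atTop (𝓝 0) := tendsto_const_nhds.div_atTop tendsto_id
  have hsmall := (hg.comp_tendsto hdiv).mul_isBigO (isBigO_refl (fun r : ℝ => r ^ 2) atTop)
  rw [← isLittleO_one_iff ℝ]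
  refine (hsmall.congr_left fun r => mul_comm _ _).trans_isBigO ?_
  refine (isBigO_const_one ℝ (a ^ 2) atTop).congr' ?_ EventuallyEq.rfl
  filter_upwards [eventually_ne_atTop 0] with r hr
  simp only [Function.comp, div_pow]
  field_simp

theorem stmt_6_general (a : ℝ) :
    Filter.Tendsto (fun r : ℝ =>
      r ^ 2 * (3 * Real.arccos (Real.cos (a / r) / (Real.cos (a / r) + 1)) - Real.pi))
      Filter.atTop (nhds (Real.sqrt 3 / 4 * a ^ 2)) := by
  have h := (tendsto_sq_mul_comp_div_atTop arccos_cos_div_cos_add_one_isLittleO a).const_add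
    (√3 / 4 * a ^ 2)
  rw [add_zero] at h
  refine h.congr' ?_
  filter_upwards [eventually_ne_atTop 0] with r hr
  field_simp
  ring

theorem stmt_6 (a : ℝ) (ha : 0 < a) :
    Filter.Tendsto (fun r : ℝ =>
      r ^ 2 * (3 * Real.arccos (Real.cos (a / r) / (Real.cos (a / r) + 1)) - Real.pi))
      Filter.atTop (nhds (Real.sqrt 3 / 4 * a ^ 2)) :=
  stmt_6_general a
end

section
/- For every r > 0 and a > 0 with a < 2r·arctan(√2), the area of the regular spherical triangle satisfies r²·(3·arccos(cos(a/r)/(cos(a/r)+1)) − π) > (√3/4)·a². -/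
/-!
Put `x = a / r`. By the spherical law of cosines, `arccos (cos x / (cos x + 1))` is the angle of
the equilateral spherical triangle of side `x` on the unit sphere, and the claim says that this
angle exceeds `π / 3 + (√3 / 12) x²`. As `arccos` is decreasing, it suffices to show
`cos x / (cos x + 1) < cos (π / 3 + (√3 / 12) x²)`. Writing `cos x = 1 - 2 sin² (x / 2)` and
using `sin y > y - y³ / 6`, `sin u ≤ u` and `cos u ≥ 1 - u² / 2`, this reduces to a polynomial
inequality in `y = x / 2` that holds for `0 < y ≤ 1`; the hypothesis on `a` gives `x < 2` because
`arctan √2 < 1`.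
-/

open Real

lemma Real.arctan_sqrt_two_lt_one : arctan √2 < 1 := by
  have hsin : 5 / 6 < sin 1 := by linarith [sin_gt_sub_cube (x := 1) one_pos]
  have hsqrt : √2 < 3 / 2 := by
    rw [sqrt_lt' (by norm_num)]
    norm_num
  -- `tan 1 > (5 / 6) / (5 / 9) = 3 / 2`, using `cos 1 ≤ 5 / 9`
  have htan : √2 < tan 1 := by
    rw [tan_eq_sin_div_cos, lt_div_iff₀ cos_one_pos]
    nlinarith [cos_one_le, cos_one_pos, sqrt_nonneg 2]
  calc arctan √2 < arctan (tan 1) := arctan_strictMono htan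
    _ = 1 := arctan_tan (by linarith [pi_gt_three]) (by linarith [pi_gt_three])

lemma Real.le_cos_pi_div_three_add {u : ℝ} (hu : 0 ≤ u) :
    1 / 2 - √3 / 2 * u - u ^ 2 / 4 ≤ cos (π / 3 + u) := by
  rw [cos_add, cos_pi_div_three, sin_pi_div_three]
  have hsin : √3 / 2 * sin u ≤ √3 / 2 * u :=
    mul_le_mul_of_nonneg_left (sin_le hu) (by positivity)
  linarith [one_sub_sq_div_two_le_cos (x := u)]

lemma Real.lt_sin_sq_mul {y : ℝ} (hy₀ : 0 < y) (hy₁ : y ≤ 1) :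
    y ^ 2 + y ^ 4 / 6 < sin y ^ 2 * (1 + y ^ 2 + y ^ 4 / 6) := by
  have hpoly : y ^ 2 + y ^ 4 / 6 < (y - y ^ 3 / 6) ^ 2 * (1 + y ^ 2 + y ^ 4 / 6) := by
    have h6 : y ^ 6 ≤ y ^ 4 := pow_le_pow_of_le_one hy₀.le hy₁ (by norm_num)
    have h8 : y ^ 8 ≤ y ^ 4 := pow_le_pow_of_le_one hy₀.le hy₁ (by norm_num)
    nlinarith [pow_pos hy₀ 4, pow_pos hy₀ 10]
  have hlow : 0 < y - y ^ 3 / 6 := by nlinarith [pow_pos hy₀ 3]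
  have hsq : (y - y ^ 3 / 6) ^ 2 < sin y ^ 2 :=
    pow_lt_pow_left₀ (sin_gt_sub_cube hy₀) hlow.le two_ne_zero
  calc y ^ 2 + y ^ 4 / 6 < (y - y ^ 3 / 6) ^ 2 * (1 + y ^ 2 + y ^ 4 / 6) := hpoly
    _ ≤ sin y ^ 2 * (1 + y ^ 2 + y ^ 4 / 6) := by gcongr

lemma Real.cos_lt_cos_pi_div_three_add_mul {x : ℝ} (hx₀ : 0 < x) (hx₂ : x ≤ 2) :
    cos x < cos (π / 3 + √3 / 12 * x ^ 2) * (cos x + 1) := by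
  obtain ⟨y, rfl⟩ : ∃ y, x = 2 * y := ⟨x / 2, by ring⟩
  have h3 : √3 ^ 2 = 3 := sq_sqrt (by norm_num)
  have hc : 1 / 2 - y ^ 2 / 2 - y ^ 4 / 12 ≤ cos (π / 3 + √3 / 12 * (2 * y) ^ 2) := by
    have := le_cos_pi_div_three_add (u := √3 / 12 * (2 * y) ^ 2) (by positivity)
    linear_combination this + (y ^ 2 / 6 + y ^ 4 / 36) * h3
  have hs := lt_sin_sq_mul (y := y) (by linarith) (by linarith)
  have hs₁ : sin y ^ 2 ≤ 1 := sin_sq_le_one y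
  rw [cos_two_mul_eq_one_sub]
  nlinarith [mul_le_mul_of_nonneg_right hc (by linarith : (0 : ℝ) ≤ 2 - 2 * sin y ^ 2)]

lemma Real.pi_div_three_add_lt_arccos {x : ℝ} (hx₀ : 0 < x) (hx₂ : x ≤ 2) :
    π / 3 + √3 / 12 * x ^ 2 < arccos (cos x / (cos x + 1)) := by
  have hcos : -1 / 2 ≤ cos x := by
    have hhalf : 1 / 2 ≤ cos (x / 2) := by
      nlinarith [one_sub_sq_div_two_le_cos (x := x / 2)]
    have hdouble : cos x = 2 * cos (x / 2) ^ 2 - 1 := by rw [← cos_two_mul]; ring_nf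
    nlinarith
  have hden : 0 < cos x + 1 := by linarith
  have hθ : π / 3 + √3 / 12 * x ^ 2 ≤ π := by
    have : √3 < 2 := by rw [sqrt_lt' two_pos]; norm_num
    nlinarith [pi_gt_three]
  calc π / 3 + √3 / 12 * x ^ 2 = arccos (cos (π / 3 + √3 / 12 * x ^ 2)) :=
        (arccos_cos (by positivity) hθ).symm
    _ < arccos (cos x / (cos x + 1)) := by
      refine arccos_lt_arccos ?_ ?_ (cos_le_one _)
      · rw [le_div_iff₀ hden]; linarith
      · rw [div_lt_iff₀ hden]; exact cos_lt_cos_pi_div_three_add_mul hx₀ hx₂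

theorem stmt_8 (r a : ℝ) (hr : 0 < r) (ha : 0 < a)
    (hlt : a < 2 * r * Real.arctan (Real.sqrt 2)) :
    r ^ 2 * (3 * Real.arccos (Real.cos (a / r) / (Real.cos (a / r) + 1)) - Real.pi) >
      Real.sqrt 3 / 4 * a ^ 2 := by
  have hx₂ : a / r ≤ 2 := by
    rw [div_le_iff₀ hr]
    nlinarith [arctan_sqrt_two_lt_one]
  have hangle := pi_div_three_add_lt_arccos (div_pos ha hr) hx₂
  calc Real.sqrt 3 / 4 * a ^ 2 = r ^ 2 * (Real.sqrt 3 / 4 * (a / r) ^ 2) := by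
        field_simp
    _ < r ^ 2 * (3 * Real.arccos (Real.cos (a / r) / (Real.cos (a / r) + 1)) - Real.pi) := by
        gcongr
        linarith
end

section
/- For every r > 0 and a > 0, the area of the regular hyperbolic triangle satisfies r²·(π − 3·arccos(cosh(a/r)/(cosh(a/r)+1))) < (√3/4)·a². -/
/-!
In curvature `-1` the angle `α t = arccos (cosh t / (cosh t + 1))` of the equilateral triangle of
side `t` is `π / 3` at `t = 0`, so its area `π - 3 α t` agrees with `√3 t² / 4` there. The
derivatives are `3 sinh t / ((cosh t + 1) √(2 cosh t + 1))` and `√3 t / 2`, and the first is the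
smaller one for `t > 0`, because `√(2 cosh t + 1) > √3` and
`2 sinh t / (cosh t + 1) = 2 tanh (t / 2) < t`.
Curvature radius `r` reduces to this case by scaling `t = a / r`.
-/

open Real Set

namespace Real

lemma sinh_lt_mul_cosh {x : ℝ} (hx : 0 < x) : sinh x < x * cosh x := by
  have hmono : StrictMonoOn (fun t => t * cosh t - sinh t) (Ici 0) := by
    refine strictMonoOn_of_hasDerivWithinAt_pos (convex_Ici 0) (f' := fun t => t * sinh t)
      (by fun_prop) (fun t _ => ?_) (fun t ht => ?_)
    · exact ((((hasDerivAt_id' t).mul (hasDerivAt_cosh t)).sub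
        (hasDerivAt_sinh t)).congr_deriv (by ring)).hasDerivWithinAt
    · rw [interior_Ici] at ht
      exact mul_pos ht (sinh_pos_iff.2 ht)
  simpa using hmono self_mem_Ici hx.le hx

lemma two_mul_sinh_lt_mul_cosh_add_one {x : ℝ} (hx : 0 < x) :
    2 * sinh x < x * (cosh x + 1) := by
  have hsinh : sinh x = 2 * sinh (x / 2) * cosh (x / 2) := by
    rw [← sinh_two_mul, mul_div_cancel₀ _ two_ne_zero]
  have hcosh : cosh x + 1 = 2 * cosh (x / 2) ^ 2 := by
    have h := cosh_two_mul (x / 2)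
    rw [mul_div_cancel₀ _ two_ne_zero] at h
    linarith [cosh_sq (x / 2)]
  have := sinh_lt_mul_cosh (half_pos hx)
  rw [hsinh, hcosh]
  nlinarith [cosh_pos (x / 2)]

end Real

/-- The angle of the equilateral triangle of side `t` in the hyperbolic plane of curvature `-1`;
the law of cosines gives `cos α = (cosh² t - cosh t) / sinh² t = cosh t / (cosh t + 1)`. -/
noncomputable def equilateralAngle (t : ℝ) : ℝ := arccos (cosh t / (cosh t + 1))

lemma equilateralAngle_zero : equilateralAngle 0 = π / 3 := by
  rw [equilateralAngle, cosh_zero, show (1 : ℝ) / (1 + 1) = 1 / 2 by norm_num,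
    ← cos_pi_div_three, arccos_cos (by positivity) (by linarith [pi_pos])]

lemma hasDerivAt_equilateralAngle (t : ℝ) :
    HasDerivAt equilateralAngle (-(sinh t / ((cosh t + 1) * √(2 * cosh t + 1)))) t := by
  have hc : 1 ≤ cosh t := one_le_cosh t
  have hc1 : 0 < cosh t + 1 := by linarith
  have hquot : HasDerivAt (fun s => cosh s / (cosh s + 1)) (sinh t / (cosh t + 1) ^ 2) t :=
    ((hasDerivAt_cosh t).div ((hasDerivAt_cosh t).add_const 1) hc1.ne').congr_deriv (by ring)
  have hgt : -1 < cosh t / (cosh t + 1) := by linarith [div_pos (by linarith) hc1]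
  have hlt : cosh t / (cosh t + 1) < 1 := (div_lt_one hc1).2 (by linarith)
  have hsqrt : √(1 - (cosh t / (cosh t + 1)) ^ 2) = √(2 * cosh t + 1) / (cosh t + 1) := by
    rw [show 1 - (cosh t / (cosh t + 1)) ^ 2 = (2 * cosh t + 1) / (cosh t + 1) ^ 2 by
      field_simp; ring, sqrt_div (by linarith), sqrt_sq hc1.le]
  refine ((hasDerivAt_arccos hgt.ne' hlt.ne).comp t hquot).congr_deriv ?_
  rw [hsqrt]
  field_simp

lemma three_mul_sinh_div_lt {t : ℝ} (ht : 0 < t) :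
    3 * (sinh t / ((cosh t + 1) * √(2 * cosh t + 1))) < √3 / 2 * t := by
  have hc : 1 < cosh t := one_lt_cosh.2 ht.ne'
  have htanh : 2 * sinh t / (cosh t + 1) < t := by
    rw [div_lt_iff₀ (by linarith)]
    exact two_mul_sinh_lt_mul_cosh_add_one ht
  have hsqrt : √3 < √(2 * cosh t + 1) := sqrt_lt_sqrt (by norm_num) (by linarith)
  have hfactor : 3 / √(2 * cosh t + 1) < √3 := by
    rw [div_lt_iff₀ (by positivity)]
    calc (3 : ℝ) = √3 * √3 := (mul_self_sqrt (by norm_num)).symm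
      _ < √3 * √(2 * cosh t + 1) := by gcongr
  calc 3 * (sinh t / ((cosh t + 1) * √(2 * cosh t + 1)))
      = 3 / √(2 * cosh t + 1) * (2 * sinh t / (cosh t + 1)) / 2 := by
        field_simp
    _ < √3 * t / 2 := by gcongr
    _ = √3 / 2 * t := by ring

lemma pi_sub_three_mul_equilateralAngle_lt {t : ℝ} (ht : 0 < t) :
    π - 3 * equilateralAngle t < √3 / 4 * t ^ 2 := by
  set F := fun s => √3 / 4 * s ^ 2 + 3 * equilateralAngle s
  have hF : ∀ s, HasDerivAt F
      (√3 / 2 * s - 3 * (sinh s / ((cosh s + 1) * √(2 * cosh s + 1)))) s := fun s =>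
    (((hasDerivAt_pow 2 s).const_mul (√3 / 4)).add
      ((hasDerivAt_equilateralAngle s).const_mul 3)).congr_deriv (by push_cast; ring)
  have hmono : StrictMonoOn F (Ici 0) := by
    refine strictMonoOn_of_hasDerivWithinAt_pos (convex_Ici 0)
      (fun s _ => (hF s).continuousAt.continuousWithinAt) (fun s _ => (hF s).hasDerivWithinAt) ?_
    rw [interior_Ici]
    exact fun s hs => sub_pos.2 (three_mul_sinh_div_lt hs)
  have := hmono self_mem_Ici ht.le ht
  simp only [F, equilateralAngle_zero] at this
  linarith

theorem stmt_9 (r a : ℝ) (hr : 0 < r) (ha : 0 < a) :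
    r ^ 2 * (Real.pi - 3 * Real.arccos (Real.cosh (a / r) / (Real.cosh (a / r) + 1))) <
      Real.sqrt 3 / 4 * a ^ 2 := by
  calc r ^ 2 * (π - 3 * equilateralAngle (a / r))
      < r ^ 2 * (√3 / 4 * (a / r) ^ 2) := by
        gcongr
        exact pi_sub_three_mul_equilateralAngle_lt (div_pos ha hr)
    _ = √3 / 4 * a ^ 2 := by field_simp
end

section
/- The Taylor expansion of f(u) = 3·arccos(cos u/(cos u + 1)) − π at u = 0 begins f(u) = (√3/4)·u²·(1 + u²/8 + u⁴/60 + O(u⁶)); in particular, lim_{u→0} (f(u) − (√3/4)u² − (√3/32)u⁴)/u⁶ = √3/240. -/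
/-!
With `h = f'`, `h u = 3 sin u / ((1 + cos u) √(2 cos u + 1))`, L'Hôpital reduces the claim to
`(h u - q u) / u ^ 5 → √3 / 40`, where `q u = √3/2 u + √3/8 u³` is the derivative of the
subtracted polynomial. The square `h² = 9 (1 - cos u) / ((1 + cos u)(1 + 2 cos u))` is free of
the root, so `(h² - q²)(1 + cos u)(1 + 2 cos u)` is a polynomial in `u` and `cos u`, and the
degree 6 Taylor polynomial of `cos` shows that it is `9/20 u⁶ + o(u⁶)`. Dividing by
`h + q ~ √3 u` gives the limit.
-/

open Real Filter Topology Finset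

namespace SphericalTriangle

noncomputable def cosTaylor6 (x : ℝ) : ℝ := 1 - x ^ 2 / 2 + x ^ 4 / 24 - x ^ 6 / 720

theorem abs_cos_sub_cosTaylor6_le {x : ℝ} (hx : |x| ≤ 1) : |cos x - cosTaylor6 x| ≤ |x| ^ 8 := by
  have hxI : ‖(x : ℂ) * Complex.I‖ ≤ 1 := by simpa using hx
  have hxI' : ‖-(x : ℂ) * Complex.I‖ ≤ 1 := by simpa using hx
  rw [← Real.norm_eq_abs, ← Complex.norm_real, Complex.ofReal_sub, Complex.ofReal_cos]
  calc ‖Complex.cos x - (cosTaylor6 x : ℂ)‖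
      = ‖(Complex.exp (-x * Complex.I) - ∑ m ∈ range 8, (-x * Complex.I) ^ m / m.factorial) / 2 +
         (Complex.exp (x * Complex.I) - ∑ m ∈ range 8, (x * Complex.I) ^ m / m.factorial) / 2‖ := by
        simp [Complex.cos, cosTaylor6, field, sum_range_succ, Nat.factorial]
        grind [Complex.I_sq, two_ne_zero]
    _ ≤ ‖Complex.exp (-x * Complex.I) - ∑ m ∈ range 8, (-x * Complex.I) ^ m / m.factorial‖ / 2 +
        ‖Complex.exp (x * Complex.I) - ∑ m ∈ range 8, (x * Complex.I) ^ m / m.factorial‖ / 2 := by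
        grw [norm_add_le]
        simp
    _ ≤ ‖-x * Complex.I‖ ^ 8 * (Nat.succ 8 * (Nat.factorial 8 * (8 : ℕ) : ℝ)⁻¹) / 2 +
        ‖x * Complex.I‖ ^ 8 * (Nat.succ 8 * (Nat.factorial 8 * (8 : ℕ) : ℝ)⁻¹) / 2 := by
        grw [Complex.exp_bound hxI' (by simp), Complex.exp_bound hxI (by simp)]
    _ ≤ |x| ^ 8 := by
        simp only [neg_mul, norm_neg, norm_mul, Complex.norm_real, Complex.norm_I, mul_one,
          Real.norm_eq_abs]
        norm_num [Nat.factorial]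
        nlinarith [pow_nonneg (abs_nonneg x) 8]

theorem tendsto_cos_sub_cosTaylor6_div_pow :
    Tendsto (fun u => (cos u - cosTaylor6 u) / u ^ 6) (𝓝[≠] 0) (𝓝 0) := by
  have hsq : Tendsto (fun u : ℝ => u ^ 2) (𝓝[≠] 0) (𝓝 0) :=
    ((continuous_pow 2).tendsto' 0 0 (by simp)).mono_left nhdsWithin_le_nhds
  refine squeeze_zero_norm' ?_ hsq
  filter_upwards [self_mem_nhdsWithin, nhdsWithin_le_nhds (Metric.ball_mem_nhds (0 : ℝ) one_pos)]
    with u (hu0 : u ≠ 0) hu1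
  rw [mem_ball_zero_iff, Real.norm_eq_abs] at hu1
  rw [norm_div, norm_pow, Real.norm_eq_abs, div_le_iff₀ (by positivity)]
  calc |cos u - cosTaylor6 u| ≤ |u| ^ 8 := abs_cos_sub_cosTaylor6_le hu1.le
    _ = |u| ^ 2 * |u| ^ 6 := by ring
    _ = u ^ 2 * |u| ^ 6 := by rw [sq_abs]

noncomputable def equilateralArea (u : ℝ) : ℝ := 3 * arccos (cos u / (cos u + 1)) - π

noncomputable def equilateralAreaDeriv (u : ℝ) : ℝ :=
  3 * sin u / ((1 + cos u) * √(2 * cos u + 1))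

theorem equilateralArea_zero : equilateralArea 0 = 0 := by
  have : arccos (1 / 2) = π / 3 := by
    rw [← cos_pi_div_three, arccos_cos (by positivity) (by linarith [pi_pos])]
  norm_num [equilateralArea, this]
  ring

theorem hasDerivAt_equilateralArea {u : ℝ} (hu : -1 / 2 < cos u) :
    HasDerivAt equilateralArea (equilateralAreaDeriv u) u := by
  have hc1 : cos u + 1 ≠ 0 := by linarith
  have hx : HasDerivAt (fun y => cos y / (cos y + 1)) (-sin u / (cos u + 1) ^ 2) u := by
    refine ((hasDerivAt_cos u).fun_div ((hasDerivAt_cos u).add_const 1) hc1).congr_deriv ?_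
    ring
  have hgt : -1 < cos u / (cos u + 1) := by
    rw [lt_div_iff₀ (by linarith)]; linarith
  have hlt : cos u / (cos u + 1) < 1 := by
    rw [div_lt_one (by linarith)]; linarith
  have hsqrt : √(1 - (cos u / (cos u + 1)) ^ 2) = √(2 * cos u + 1) / (cos u + 1) := by
    have : 1 - (cos u / (cos u + 1)) ^ 2 = (2 * cos u + 1) / (cos u + 1) ^ 2 := by
      field_simp
      ring
    rw [this, sqrt_div (by linarith), sqrt_sq (by linarith)]
  refine ((((hasDerivAt_arccos hgt.ne' hlt.ne).comp u hx).const_mul 3).sub_const π).congr_deriv ?_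
  have : 0 < √(2 * cos u + 1) := sqrt_pos.mpr (by linarith)
  have : 1 + cos u ≠ 0 := by linarith
  rw [hsqrt, equilateralAreaDeriv]
  field_simp
  ring

theorem equilateralAreaDeriv_sq {u : ℝ} (hu : -1 / 2 < cos u) :
    equilateralAreaDeriv u ^ 2 = 9 * (1 - cos u) / ((1 + cos u) * (1 + 2 * cos u)) := by
  have hsq : √(2 * cos u + 1) ^ 2 = 2 * cos u + 1 := sq_sqrt (by linarith)
  have : 1 + cos u ≠ 0 := by linarith
  have : 1 + 2 * cos u ≠ 0 := by linarith
  rw [equilateralAreaDeriv, div_pow, mul_pow, mul_pow, sin_sq, hsq]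
  field_simp
  ring

theorem eventually_neg_half_lt_cos : ∀ᶠ u in 𝓝 (0 : ℝ), -1 / 2 < cos u :=
  (continuous_cos.tendsto' 0 1 cos_zero).eventually (lt_mem_nhds (by norm_num))

theorem tendsto_cos_polynomial_div_pow :
    Tendsto (fun u => (9 * (1 - cos u) -
      (3 * u ^ 2 / 4 + 3 * u ^ 4 / 8 + 3 * u ^ 6 / 64) * ((1 + cos u) * (1 + 2 * cos u))) / u ^ 6)
      (𝓝[≠] 0) (𝓝 (9 / 20)) := by
  set P : ℝ → ℝ := fun u => 3 * u ^ 2 / 4 + 3 * u ^ 4 / 8 + 3 * u ^ 6 / 64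
  -- At `cos u = cosTaylor6 u` the numerator is `u ^ 6 * R u`; it is quadratic in `cos u`, so
  -- replacing `cosTaylor6 u` by `cos u` adds `(cos u - cosTaylor6 u) * B u`.
  set R : ℝ → ℝ := fun u => 9 / 20 - 121 / 1920 * u ^ 2 - 53 / 7680 * u ^ 4 + 101 / 46080 * u ^ 6 -
    289 / 1382400 * u ^ 8 + 13 / 1382400 * u ^ 10 - 1 / 5529600 * u ^ 12
  set B : ℝ → ℝ := fun u => -9 - P u * (3 + 2 * cosTaylor6 u + 2 * cos u)
  have hR : Tendsto R (𝓝[≠] 0) (𝓝 (9 / 20)) :=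
    ((by fun_prop : Continuous R).tendsto' 0 _ (by simp [R])).mono_left nhdsWithin_le_nhds
  have hB : Tendsto B (𝓝[≠] 0) (𝓝 (B 0)) :=
    ((by simp only [B, P, cosTaylor6]; fun_prop : Continuous B).tendsto 0).mono_left
      nhdsWithin_le_nhds
  have hsum := hR.add (tendsto_cos_sub_cosTaylor6_div_pow.mul hB)
  rw [zero_mul, add_zero] at hsum
  refine hsum.congr' ?_
  filter_upwards [self_mem_nhdsWithin] with u (hu : u ≠ 0)
  simp only [P, R, B, cosTaylor6]
  field_simp
  ring

theorem tendsto_equilateralAreaDeriv_sq_sub_div_pow :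
    Tendsto (fun u => (equilateralAreaDeriv u ^ 2 - (√3 / 2 * u + √3 / 8 * u ^ 3) ^ 2) / u ^ 6)
      (𝓝[≠] 0) (𝓝 (3 / 40)) := by
  have hden : Tendsto (fun u => 1 / ((1 + cos u) * (1 + 2 * cos u))) (𝓝[≠] 0) (𝓝 (1 / 6)) := by
    have : ContinuousAt (fun u => 1 / ((1 + cos u) * (1 + 2 * cos u))) 0 := by
      fun_prop (disch := norm_num)
    convert this.tendsto.mono_left nhdsWithin_le_nhds using 2
    norm_num
  have hprod := tendsto_cos_polynomial_div_pow.mul hden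
  rw [show (9 / 20 : ℝ) * (1 / 6) = 3 / 40 by norm_num] at hprod
  refine hprod.congr' ?_
  filter_upwards [self_mem_nhdsWithin, nhdsWithin_le_nhds eventually_neg_half_lt_cos]
    with u (hu : u ≠ 0) hcos
  have hD : (1 + cos u) * (1 + 2 * cos u) ≠ 0 := mul_ne_zero (by linarith) (by linarith)
  have hq : (√3 / 2 * u + √3 / 8 * u ^ 3) ^ 2 = 3 * u ^ 2 / 4 + 3 * u ^ 4 / 8 + 3 * u ^ 6 / 64 := by
    linear_combination (u ^ 2 / 4 + u ^ 4 / 8 + u ^ 6 / 64) * sq_sqrt (show (0 : ℝ) ≤ 3 by norm_num)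
  rw [equilateralAreaDeriv_sq hcos, hq, div_sub' hD]
  ring

theorem tendsto_equilateralAreaDeriv_div :
    Tendsto (fun u => equilateralAreaDeriv u / u) (𝓝[≠] 0) (𝓝 (√3 / 2)) := by
  have hsin : Tendsto (fun u => sin u / u) (𝓝[≠] 0) (𝓝 1) := by
    simpa [div_eq_inv_mul] using (hasDerivAt_sin 0).tendsto_slope_zero
  have hfac : Tendsto (fun u => 3 / ((1 + cos u) * √(2 * cos u + 1))) (𝓝[≠] 0) (𝓝 (√3 / 2)) := by
    have : ContinuousAt (fun u => 3 / ((1 + cos u) * √(2 * cos u + 1))) 0 := by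
      fun_prop (disch := norm_num)
    convert this.tendsto.mono_left nhdsWithin_le_nhds using 2
    have h3 : √3 ^ 2 = 3 := sq_sqrt (by norm_num)
    norm_num
    field_simp
    linarith
  simpa using (hsin.mul hfac).congr fun u => by rw [equilateralAreaDeriv]; ring

theorem tendsto_equilateralAreaDeriv_sub_div_pow :
    Tendsto (fun u => (equilateralAreaDeriv u - (√3 / 2 * u + √3 / 8 * u ^ 3)) / u ^ 5)
      (𝓝[≠] 0) (𝓝 (√3 / 40)) := by
  have hq : Tendsto (fun u : ℝ => √3 / 2 + √3 / 8 * u ^ 2) (𝓝[≠] 0) (𝓝 (√3 / 2)) :=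
    ((by fun_prop : Continuous fun u : ℝ => √3 / 2 + √3 / 8 * u ^ 2).tendsto' 0 _ (by simp))
      |>.mono_left nhdsWithin_le_nhds
  have hsum : Tendsto (fun u => (equilateralAreaDeriv u + (√3 / 2 * u + √3 / 8 * u ^ 3)) / u)
      (𝓝[≠] 0) (𝓝 √3) := by
    refine (add_halves √3 ▸ tendsto_equilateralAreaDeriv_div.add hq).congr' ?_
    filter_upwards [self_mem_nhdsWithin] with u (hu : u ≠ 0)
    field_simp
  have hsum0 : √3 ≠ 0 := by positivity
  have hquot := tendsto_equilateralAreaDeriv_sq_sub_div_pow.div hsum hsum0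
  rw [div_right_comm, div_sqrt] at hquot
  refine hquot.congr' ?_
  filter_upwards [self_mem_nhdsWithin, hsum.eventually_ne hsum0] with u (hu : u ≠ 0) hne
  rw [Pi.div_apply, sq_sub_sq]
  generalize equilateralAreaDeriv u + (√3 / 2 * u + √3 / 8 * u ^ 3) = s at hne ⊢
  have : s ≠ 0 := (div_ne_zero_iff.mp hne).1
  field_simp

end SphericalTriangle

open SphericalTriangle in
theorem stmt_11 :
    Filter.Tendsto (fun u : ℝ =>
      ((3 * Real.arccos (Real.cos u / (Real.cos u + 1)) - Real.pi)
        - Real.sqrt 3 / 4 * u ^ 2 - Real.sqrt 3 / 32 * u ^ 4) / u ^ 6)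
      (nhdsWithin 0 {0}ᶜ) (nhds (Real.sqrt 3 / 240)) := by
  have hderiv : ∀ᶠ u in 𝓝 0,
      HasDerivAt (fun u => equilateralArea u - √3 / 4 * u ^ 2 - √3 / 32 * u ^ 4)
        (equilateralAreaDeriv u - (√3 / 2 * u + √3 / 8 * u ^ 3)) u := by
    filter_upwards [eventually_neg_half_lt_cos] with u hu
    refine (((hasDerivAt_equilateralArea hu).fun_sub
      ((hasDerivAt_pow 2 u).const_mul (√3 / 4))).fun_sub
        ((hasDerivAt_pow 4 u).const_mul (√3 / 32))).congr_deriv ?_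
    norm_num
    ring
  refine HasDerivAt.lhopital_zero_nhdsNE (nhdsWithin_le_nhds hderiv)
    (.of_forall fun u => hasDerivAt_pow 6 u) ?_ ?_ ?_ ?_
  · filter_upwards [self_mem_nhdsWithin] with u (hu : u ≠ 0)
    positivity
  · have := hderiv.self_of_nhds.continuousAt.tendsto.mono_left (nhdsWithin_le_nhds (s := {0}ᶜ))
    norm_num [equilateralArea_zero] at this
    exact this
  · simpa using ((continuous_pow 6).tendsto' (0 : ℝ) 0 (by simp)).mono_left nhdsWithin_le_nhds
  · convert (tendsto_equilateralAreaDeriv_sub_div_pow.div_const 6) using 2 with u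
    · push_cast; ring
    · ring
end

section
/- For r > 0, the limit as a → 2r·arctan(√2) of 12r³·∫₀^{tan(a/(2r))} t·arctan(t)/((3 − t²)√(2 − t²)) dt equals π²·r³, i.e., 12·∫₀^{√2} t·arctan(t)/((3 − t²)√(2 − t²)) dt = π². -/
/-!
Substituting `t = √2 sin θ` turns the integral into
`∫₀^{π/2} √2 sin θ · arctan (√2 sin θ) / (3 - 2 sin² θ) dθ`; the one-dimensional change of variables
formula for injective maps needs no integrability, so the singularity at `t = √2` causes no trouble.
Writing `arctan x = ∫₀¹ x / (1 + x² u²) du` and exchanging the order of integration, partial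
fractions split the inner integral into two instances of
`∫₀^{π/2} dθ / (a² cos² θ + b² sin² θ) = π / (2ab)`, and the outer integral is
`π/2 · (arctan √3 - arctan (1/√3)) = π² / 12`. The limit follows because the primitive of an
integrable function is continuous and `tan (a / 2r) → √2` from below.
-/

open Real Set Filter Topology intervalIntegral

theorem mul_cos_sq_add_mul_sin_sq_pos {p q : ℝ} (hp : 0 < p) (hq : 0 < q) (θ : ℝ) :
    0 < p * cos θ ^ 2 + q * sin θ ^ 2 := by
  rcases (sq_nonneg (sin θ)).eq_or_lt with h | h
  · nlinarith [sin_sq_add_cos_sq θ]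
  · nlinarith [mul_nonneg hp.le (sq_nonneg (cos θ))]

/-- `arctan (b tan θ / a) / (a b)`, rewritten with the subtraction formula for `arctan` so that it
is smooth across `θ = π / 2`. -/
theorem hasDerivAt_smooth_arctan_tan {a b : ℝ} (ha : 0 < a) (hb : 0 < b) (θ : ℝ) :
    HasDerivAt (fun θ => (θ + arctan ((b - a) * (sin θ * cos θ) /
        (a * cos θ ^ 2 + b * sin θ ^ 2))) / (a * b))
      (a ^ 2 * cos θ ^ 2 + b ^ 2 * sin θ ^ 2)⁻¹ θ := by
  have hsc := sin_sq_add_cos_sq θ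
  have hD := mul_cos_sq_add_mul_sin_sq_pos ha hb θ
  have hQ := mul_cos_sq_add_mul_sin_sq_pos (pow_pos ha 2) (pow_pos hb 2) θ
  have hN : HasDerivAt (fun θ => (b - a) * (sin θ * cos θ))
      ((b - a) * (cos θ * cos θ + sin θ * -sin θ)) θ :=
    ((hasDerivAt_sin θ).mul (hasDerivAt_cos θ)).const_mul _
  have hD' : HasDerivAt (fun θ => a * cos θ ^ 2 + b * sin θ ^ 2)
      (2 * (b - a) * sin θ * cos θ) θ := by
    refine ((((hasDerivAt_cos θ).fun_pow 2).const_mul a).fun_add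
      (((hasDerivAt_sin θ).fun_pow 2).const_mul b)).congr_deriv ?_
    norm_num
    ring
  have hu : HasDerivAt (fun θ => (b - a) * (sin θ * cos θ) / (a * cos θ ^ 2 + b * sin θ ^ 2))
      ((b - a) * (a * cos θ ^ 2 - b * sin θ ^ 2) / (a * cos θ ^ 2 + b * sin θ ^ 2) ^ 2) θ := by
    refine (hN.fun_div hD' hD.ne').congr_deriv ?_
    congr 1
    linear_combination (b - a) * (a * cos θ ^ 2 - b * sin θ ^ 2) * hsc
  have h1 : 1 + ((b - a) * (sin θ * cos θ) / (a * cos θ ^ 2 + b * sin θ ^ 2)) ^ 2 =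
      (a ^ 2 * cos θ ^ 2 + b ^ 2 * sin θ ^ 2) / (a * cos θ ^ 2 + b * sin θ ^ 2) ^ 2 := by
    field_simp
    linear_combination (a ^ 2 * cos θ ^ 2 + b ^ 2 * sin θ ^ 2) * hsc
  refine (((hasDerivAt_id θ).add hu.arctan).div_const _).congr_deriv ?_
  rw [h1]
  field_simp
  linear_combination a * b * hsc

theorem integral_inv_sq_mul_cos_sq_add_sq_mul_sin_sq {a b : ℝ} (ha : 0 < a) (hb : 0 < b) :
    ∫ θ in (0 : ℝ)..π / 2, (a ^ 2 * cos θ ^ 2 + b ^ 2 * sin θ ^ 2)⁻¹ = π / (2 * a * b) := by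
  have hcont : Continuous fun θ => (a ^ 2 * cos θ ^ 2 + b ^ 2 * sin θ ^ 2)⁻¹ :=
    (by fun_prop : Continuous fun θ => a ^ 2 * cos θ ^ 2 + b ^ 2 * sin θ ^ 2).inv₀
      fun θ => (mul_cos_sq_add_mul_sin_sq_pos (pow_pos ha 2) (pow_pos hb 2) θ).ne'
  rw [integral_eq_sub_of_hasDerivAt (fun θ _ => hasDerivAt_smooth_arctan_tan ha hb θ)
    (hcont.intervalIntegrable _ _)]
  simp only [sin_pi_div_two, cos_pi_div_two, sin_zero, cos_zero, ne_eq, OfNat.ofNat_ne_zero,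
    not_false_eq_true, zero_pow, one_pow, mul_zero, mul_one, zero_add, add_zero, zero_div,
    arctan_zero, sub_zero]
  field_simp

theorem arctan_eq_integral (x : ℝ) : arctan x = ∫ u in (0 : ℝ)..1, x / (1 + x ^ 2 * u ^ 2) := by
  have hderiv (u : ℝ) : HasDerivAt (fun u => arctan (x * u)) (x / (1 + x ^ 2 * u ^ 2)) u := by
    refine ((hasDerivAt_id u).const_mul x).arctan.congr_deriv ?_
    simp only [id, mul_one, mul_pow]
    field_simp
  have hcont : Continuous fun u : ℝ => x / (1 + x ^ 2 * u ^ 2) :=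
    continuous_const.div (by fun_prop) fun u => by positivity
  rw [integral_eq_sub_of_hasDerivAt (fun u _ => hderiv u) (hcont.intervalIntegrable _ _)]
  simp

theorem intervalIntegral_integral_swap_of_continuous {E : Type*} [NormedAddCommGroup E]
    [NormedSpace ℝ E] {f : ℝ → ℝ → E} (hf : Continuous (Function.uncurry f)) {a b c d : ℝ}
    (hab : a ≤ b) (hcd : c ≤ d) :
    ∫ x in a..b, ∫ y in c..d, f x y = ∫ y in c..d, ∫ x in a..b, f x y := by
  simp only [integral_of_le hab, integral_of_le hcd]
  refine MeasureTheory.integral_integral_swap ?_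
  rw [MeasureTheory.Measure.prod_restrict]
  exact (hf.continuousOn.integrableOn_compact (isCompact_Icc.prod isCompact_Icc)).mono_set
    (prod_mono Ioc_subset_Icc_self Ioc_subset_Icc_self)

theorem integral_two_sin_sq_div (u : ℝ) :
    ∫ θ in (0 : ℝ)..π / 2, 2 * sin θ ^ 2 / ((3 - 2 * sin θ ^ 2) * (1 + 2 * u ^ 2 * sin θ ^ 2)) =
      π / 2 * ((√3 - (√(1 + 2 * u ^ 2))⁻¹) / (1 + 3 * u ^ 2)) := by
  have hm : 0 < 1 + 2 * u ^ 2 := by positivity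
  have h3 : ∫ θ in (0 : ℝ)..π / 2, (3 - 2 * sin θ ^ 2)⁻¹ = π / (2 * √3) := by
    have h := integral_inv_sq_mul_cos_sq_add_sq_mul_sin_sq (sqrt_pos.2 three_pos) one_pos
    rw [mul_one, sq_sqrt three_pos.le] at h
    rw [← h]
    refine integral_congr fun θ _ => ?_
    simp only [cos_sq', one_pow]
    ring_nf
  have hu : ∫ θ in (0 : ℝ)..π / 2, (1 + 2 * u ^ 2 * sin θ ^ 2)⁻¹ = π / (2 * √(1 + 2 * u ^ 2)) := by
    have h := integral_inv_sq_mul_cos_sq_add_sq_mul_sin_sq one_pos (sqrt_pos.2 hm)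
    rw [mul_one, sq_sqrt hm.le] at h
    rw [← h]
    refine integral_congr fun θ _ => ?_
    simp only [cos_sq', one_pow]
    ring_nf
  have hpf (θ : ℝ) : 2 * sin θ ^ 2 / ((3 - 2 * sin θ ^ 2) * (1 + 2 * u ^ 2 * sin θ ^ 2)) =
      (3 * (3 - 2 * sin θ ^ 2)⁻¹ - (1 + 2 * u ^ 2 * sin θ ^ 2)⁻¹) / (1 + 3 * u ^ 2) := by
    have : 0 < 3 - 2 * sin θ ^ 2 := by nlinarith [sin_sq_le_one θ]
    field_simp
    ring
  have hc3 : Continuous fun θ => (3 - 2 * sin θ ^ 2)⁻¹ :=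
    (by fun_prop : Continuous fun θ => 3 - 2 * sin θ ^ 2).inv₀
      fun θ => by nlinarith [sin_sq_le_one θ]
  have hcu : Continuous fun θ => (1 + 2 * u ^ 2 * sin θ ^ 2)⁻¹ :=
    (by fun_prop : Continuous fun θ => 1 + 2 * u ^ 2 * sin θ ^ 2).inv₀ fun θ => by positivity
  simp only [hpf]
  rw [intervalIntegral.integral_div, integral_sub ((hc3.intervalIntegrable _ _).const_mul 3)
    (hcu.intervalIntegrable _ _), integral_const_mul, h3, hu]
  have : (0 : ℝ) < √3 := by positivity
  field_simp
  linear_combination -√(1 + 2 * u ^ 2) * sq_sqrt three_pos.le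

theorem integral_sqrt_three_sub_inv_sqrt_div :
    ∫ u in (0 : ℝ)..1, (√3 - (√(1 + 2 * u ^ 2))⁻¹) / (1 + 3 * u ^ 2) = π / 6 := by
  have hderiv (u : ℝ) : HasDerivAt (fun u => arctan (√3 * u) - arctan (u / √(1 + 2 * u ^ 2)))
      ((√3 - (√(1 + 2 * u ^ 2))⁻¹) / (1 + 3 * u ^ 2)) u := by
    have hm : 0 < 1 + 2 * u ^ 2 := by positivity
    have hs : 0 < √(1 + 2 * u ^ 2) := sqrt_pos.2 hm
    have hsq : HasDerivAt (fun u => √(1 + 2 * u ^ 2)) (2 * u / √(1 + 2 * u ^ 2)) u := by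
      refine ((hasDerivAt_pow 2 u).const_mul 2).const_add 1 |>.sqrt hm.ne' |>.congr_deriv ?_
      field_simp
      norm_num
    refine (((hasDerivAt_id u).const_mul √3).arctan.sub
      ((hasDerivAt_id u).fun_div hsq hs.ne').arctan).congr_deriv ?_
    have h2 := sq_sqrt hm.le
    set m := √(1 + 2 * u ^ 2)
    simp only [id, mul_one, one_mul, mul_pow, div_pow, sq_sqrt three_pos.le, h2]
    field_simp
    linear_combination -(1 + 3 * u ^ 2) * h2
  have hcont : Continuous fun u : ℝ => (√3 - (√(1 + 2 * u ^ 2))⁻¹) / (1 + 3 * u ^ 2) :=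
    (continuous_const.sub ((by fun_prop : Continuous fun u : ℝ => √(1 + 2 * u ^ 2)).inv₀
      fun u => (sqrt_pos.2 (by positivity)).ne')).div (by fun_prop) fun u => by positivity
  rw [integral_eq_sub_of_hasDerivAt (fun u _ => hderiv u) (hcont.intervalIntegrable _ _)]
  norm_num [arctan_sqrt_three, ← inv_eq_one_div, arctan_inv_sqrt_three]
  ring

theorem integral_sin_mul_arctan_div :
    ∫ θ in (0 : ℝ)..π / 2, √2 * sin θ * arctan (√2 * sin θ) / (3 - 2 * sin θ ^ 2) = π ^ 2 / 12 := by
  have hpos (θ u : ℝ) : 0 < (3 - 2 * sin θ ^ 2) * (1 + 2 * u ^ 2 * sin θ ^ 2) := by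
    have := sin_sq_le_one θ
    have : 0 ≤ 2 * u ^ 2 * sin θ ^ 2 := by positivity
    nlinarith
  have hinner (θ : ℝ) : √2 * sin θ * arctan (√2 * sin θ) / (3 - 2 * sin θ ^ 2) =
      ∫ u in (0 : ℝ)..1, 2 * sin θ ^ 2 / ((3 - 2 * sin θ ^ 2) * (1 + 2 * u ^ 2 * sin θ ^ 2)) := by
    rw [arctan_eq_integral, ← integral_const_mul, ← intervalIntegral.integral_div]
    refine integral_congr fun u _ => ?_
    have : 0 < 3 - 2 * sin θ ^ 2 := by nlinarith [sin_sq_le_one θ]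
    field_simp
    rw [sq_sqrt two_pos.le]
    ring
  have hcont : Continuous (Function.uncurry fun θ u : ℝ =>
      2 * sin θ ^ 2 / ((3 - 2 * sin θ ^ 2) * (1 + 2 * u ^ 2 * sin θ ^ 2))) :=
    (by fun_prop : Continuous fun p : ℝ × ℝ => 2 * sin p.1 ^ 2).div (by fun_prop)
      fun p => (hpos p.1 p.2).ne'
  simp only [hinner]
  rw [intervalIntegral_integral_swap_of_continuous hcont (by positivity) zero_le_one,
    integral_congr fun u _ => integral_two_sin_sq_div u, integral_const_mul,
    integral_sqrt_three_sub_inv_sqrt_div]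
  ring

section SineSubstitution

variable {R : ℝ}

theorem strictMonoOn_mul_sin (hR : 0 < R) : StrictMonoOn (fun θ => R * sin θ) (Icc 0 (π / 2)) :=
  fun _ hx _ hy hxy => mul_lt_mul_of_pos_left
    (strictMonoOn_sin ⟨by linarith [pi_pos, hx.1], hx.2⟩ ⟨by linarith [pi_pos, hy.1], hy.2⟩ hxy) hR

theorem image_mul_sin_Ioo (hR : 0 < R) : (fun θ => R * sin θ) '' Ioo 0 (π / 2) = Ioo 0 R := by
  simpa using (continuous_const.mul continuous_sin).continuousOn.image_Ioo_of_strictMonoOn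
    pi_div_two_pos.le (strictMonoOn_mul_sin hR)

theorem abs_mul_cos_mul_div_sqrt (hR : 0 < R) {θ : ℝ} (hθ : θ ∈ Ioo 0 (π / 2)) (x : ℝ) :
    |R * cos θ| * (x / √(R ^ 2 - (R * sin θ) ^ 2)) = x := by
  have hcos : 0 < cos θ := cos_pos_of_mem_Ioo ⟨by linarith [hθ.1, pi_pos], hθ.2⟩
  have hsqrt : √(R ^ 2 - (R * sin θ) ^ 2) = R * cos θ := by
    rw [← sqrt_sq (by positivity : 0 ≤ R * cos θ), mul_pow, mul_pow, cos_sq']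
    ring_nf
  rw [hsqrt, abs_of_pos (by positivity)]
  field_simp

theorem integral_div_sqrt_sq_sub_sq (hR : 0 < R) (g : ℝ → ℝ) :
    ∫ t in (0 : ℝ)..R, g t / √(R ^ 2 - t ^ 2) = ∫ θ in (0 : ℝ)..π / 2, g (R * sin θ) := by
  rw [integral_of_le hR.le, integral_of_le pi_div_two_pos.le,
    MeasureTheory.integral_Ioc_eq_integral_Ioo, MeasureTheory.integral_Ioc_eq_integral_Ioo,
    ← image_mul_sin_Ioo hR,
    MeasureTheory.integral_image_eq_integral_abs_deriv_smul measurableSet_Ioo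
      (fun θ _ => ((hasDerivAt_sin θ).const_mul R).hasDerivWithinAt)
      ((strictMonoOn_mul_sin hR).injOn.mono Ioo_subset_Icc_self)]
  exact MeasureTheory.setIntegral_congr_fun measurableSet_Ioo fun θ hθ =>
    abs_mul_cos_mul_div_sqrt hR hθ _

theorem integrableOn_div_sqrt_sq_sub_sq (hR : 0 < R) {g : ℝ → ℝ} (hg : ContinuousOn g (Icc 0 R)) :
    MeasureTheory.IntegrableOn (fun t => g t / √(R ^ 2 - t ^ 2)) (Icc 0 R) := by
  rw [integrableOn_Icc_iff_integrableOn_Ioo, ← image_mul_sin_Ioo hR,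
    MeasureTheory.integrableOn_image_iff_integrableOn_abs_deriv_smul measurableSet_Ioo
      (fun θ _ => ((hasDerivAt_sin θ).const_mul R).hasDerivWithinAt)
      ((strictMonoOn_mul_sin hR).injOn.mono Ioo_subset_Icc_self)]
  refine MeasureTheory.IntegrableOn.congr_fun ?_
    (fun θ hθ => (abs_mul_cos_mul_div_sqrt hR hθ _).symm) measurableSet_Ioo
  refine (ContinuousOn.integrableOn_Icc ?_).mono_set Ioo_subset_Icc_self
  exact hg.comp (by fun_prop) fun θ hθ =>
    ⟨mul_nonneg hR.le (sin_nonneg_of_nonneg_of_le_pi hθ.1 (by linarith [hθ.2, pi_pos])),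
      mul_le_of_le_one_right hR.le (sin_le_one θ)⟩

end SineSubstitution

theorem tendsto_tan_div_nhdsLT {c : ℝ} (hc : 0 < c) (x : ℝ) :
    Tendsto (fun a => tan (a / c)) (𝓝[<] (c * arctan x)) (𝓝[<] x) := by
  have hcx : c * arctan x / c = arctan x := by field_simp
  refine tendsto_nhdsWithin_of_tendsto_nhds_of_eventually_within _ ?_ ?_
  · have hcont : ContinuousAt (fun a => tan (a / c)) (c * arctan x) :=
      (continuousAt_tan.2 (by rw [hcx]; exact (cos_arctan_pos x).ne')).comp
        (continuousAt_id.div_const c)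
    simpa [hcx] using hcont.tendsto.mono_left nhdsWithin_le_nhds
  · have hlow : -(π / 2) * c < c * arctan x := by
      nlinarith [neg_pi_div_two_lt_arctan x]
    filter_upwards [Ioo_mem_nhdsLT hlow] with a ha
    have h1 : -(π / 2) < a / c := by rw [lt_div_iff₀ hc]; exact ha.1
    have h2 : a / c < arctan x := by rw [div_lt_iff₀ hc, mul_comm]; exact ha.2
    simpa using strictMonoOn_tan ⟨h1, h2.trans (arctan_lt_pi_div_two x)⟩
      ⟨neg_pi_div_two_lt_arctan x, arctan_lt_pi_div_two x⟩ h2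

theorem continuousOn_mul_arctan_div :
    ContinuousOn (fun t => t * arctan t / (3 - t ^ 2)) (Icc 0 √2) :=
  (continuous_id.mul continuous_arctan).continuousOn.div (by fun_prop) fun t ht => by
    nlinarith [sq_sqrt two_pos.le, mul_le_mul ht.2 ht.2 ht.1 (sqrt_nonneg 2)]

theorem mul_arctan_div_mul_sqrt_eq (t : ℝ) : t * arctan t / ((3 - t ^ 2) * √(2 - t ^ 2)) =
    t * arctan t / (3 - t ^ 2) / √(√2 ^ 2 - t ^ 2) := by
  rw [sq_sqrt two_pos.le, div_mul_eq_div_div]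

theorem integral_mul_arctan_div_sqrt :
    ∫ t in (0 : ℝ)..√2, t * arctan t / ((3 - t ^ 2) * √(2 - t ^ 2)) = π ^ 2 / 12 := by
  simp only [mul_arctan_div_mul_sqrt_eq]
  rw [integral_div_sqrt_sq_sub_sq (sqrt_pos.2 two_pos), ← integral_sin_mul_arctan_div]
  refine integral_congr fun θ _ => ?_
  rw [mul_pow, sq_sqrt two_pos.le]

theorem integrableOn_mul_arctan_div_sqrt :
    MeasureTheory.IntegrableOn (fun t => t * arctan t / ((3 - t ^ 2) * √(2 - t ^ 2)))
      (Icc 0 √2) := by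
  simp only [mul_arctan_div_mul_sqrt_eq]
  exact integrableOn_div_sqrt_sq_sub_sq (sqrt_pos.2 two_pos) continuousOn_mul_arctan_div

theorem stmt_13 (r : ℝ) (hr : 0 < r) :
    Filter.Tendsto (fun a : ℝ =>
      12 * r ^ 3 * ∫ t in (0 : ℝ)..(Real.tan (a / (2 * r))),
        t * Real.arctan t / ((3 - t ^ 2) * Real.sqrt (2 - t ^ 2)))
      (nhdsWithin (2 * r * Real.arctan (Real.sqrt 2))
        (Set.Iio (2 * r * Real.arctan (Real.sqrt 2))))
      (nhds (Real.pi ^ 2 * r ^ 3)) ∧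
    12 * ∫ t in (0 : ℝ)..(Real.sqrt 2),
      t * Real.arctan t / ((3 - t ^ 2) * Real.sqrt (2 - t ^ 2)) = Real.pi ^ 2 := by
  refine ⟨?_, by rw [integral_mul_arctan_div_sqrt]; ring⟩
  have hpos : (0 : ℝ) < √2 := sqrt_pos.2 two_pos
  have hprim : ContinuousWithinAt
      (fun x => ∫ t in (0 : ℝ)..x, t * arctan t / ((3 - t ^ 2) * √(2 - t ^ 2))) (Iio √2) √2 := by
    have hint := integrableOn_mul_arctan_div_sqrt
    rw [← uIcc_of_le hpos.le] at hint
    exact (continuousOn_primitive_interval hint _ right_mem_uIcc).mono_of_mem_nhdsWithin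
      (by rw [uIcc_of_le hpos.le]; exact Icc_mem_nhdsLT hpos)
  have hlim := (hprim.tendsto.comp
    (tendsto_tan_div_nhdsLT (c := 2 * r) (by positivity) √2)).const_mul (12 * r ^ 3)
  rwa [integral_mul_arctan_div_sqrt, show 12 * r ^ 3 * (π ^ 2 / 12) = π ^ 2 * r ^ 3 by ring] at hlim
end

section
/- For any fixed a > 0, the limit as r → ∞ of 12r³·∫₀^{tan(a/(2r))} t·arctan(t)/((3 − t²)√(2 − t²)) dt equals (√2/12)·a³. -/
/-!
Near `0` the integrand is `t² / (3√2) + O(t⁴)`, so its primitive from `0` is `x³ / (9√2) + O(x⁵)`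
(L'Hôpital). Since `r · tan (a / (2r)) → a / 2`, the expression tends to
`12 · (a / 2)³ / (9√2) = (√2 / 12) a³`.
-/

open Filter Topology Real intervalIntegral

theorem HasDerivAt.tendsto_div_self_nhdsGT {g : ℝ → ℝ} {g' : ℝ} (hg : HasDerivAt g g' 0)
    (h0 : g 0 = 0) : Tendsto (fun x => g x / x) (𝓝[>] 0) (𝓝 g') := by
  simpa [h0, div_eq_inv_mul] using hg.tendsto_slope_zero_right

theorem eventually_hasDerivAt_integral_of_eventually_continuousAt {f : ℝ → ℝ} {a : ℝ}
    (hf : ∀ᶠ x in 𝓝 a, ContinuousAt f x) :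
    ∀ᶠ x in 𝓝 a, HasDerivAt (fun y => ∫ t in a..y, f t) (f x) x := by
  obtain ⟨ε, hε, hball⟩ := Metric.eventually_nhds_iff_ball.1 hf
  have hcont : ContinuousOn f (Metric.ball a ε) := fun x hx => (hball x hx).continuousWithinAt
  filter_upwards [Metric.ball_mem_nhds a hε] with x hx
  have hsub : Set.uIcc a x ⊆ Metric.ball a ε :=
    (convex_ball a ε).ordConnected.uIcc_subset (Metric.mem_ball_self hε) hx
  exact integral_hasDerivAt_right ((hcont.mono hsub).intervalIntegrable)
    (hcont.stronglyMeasurableAtFilter Metric.isOpen_ball x hx) (hball x hx)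

theorem tendsto_integral_div_pow_succ_nhdsGT {f : ℝ → ℝ} {c : ℝ} (n : ℕ)
    (hf : ∀ᶠ x in 𝓝 0, ContinuousAt f x)
    (hlim : Tendsto (fun x => f x / x ^ n) (𝓝[>] 0) (𝓝 c)) :
    Tendsto (fun x => (∫ t in (0 : ℝ)..x, f t) / x ^ (n + 1)) (𝓝[>] 0)
      (𝓝 (c / (n + 1))) := by
  have hderiv := eventually_hasDerivAt_integral_of_eventually_continuousAt hf
  have hprim : Tendsto (fun x => ∫ t in (0 : ℝ)..x, f t) (𝓝[>] 0) (𝓝 0) := by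
    simpa using hderiv.self_of_nhds.continuousAt.tendsto.mono_left nhdsWithin_le_nhds
  have hpow : Tendsto (fun x : ℝ => x ^ (n + 1)) (𝓝[>] 0) (𝓝 0) := by
    simpa using ((continuous_pow (n + 1)).tendsto (0 : ℝ)).mono_left nhdsWithin_le_nhds
  refine HasDerivAt.lhopital_zero_nhdsGT (nhdsWithin_le_nhds hderiv)
    (Eventually.of_forall fun x => hasDerivAt_pow (n + 1) x) ?_ hprim hpow ?_
  · filter_upwards [self_mem_nhdsWithin] with x (hx : 0 < x)
    positivity
  · refine (hlim.div_const (n + 1)).congr fun x => ?_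
    push_cast [add_tsub_cancel_right]
    rw [div_div, mul_comm]

noncomputable def tetrahedronIntegrand (t : ℝ) : ℝ :=
  t * arctan t / ((3 - t ^ 2) * √(2 - t ^ 2))

theorem continuousAt_tetrahedronIntegrand {t : ℝ} (ht : t ^ 2 < 2) :
    ContinuousAt tetrahedronIntegrand t := by
  have hden : (3 - t ^ 2) * √(2 - t ^ 2) ≠ 0 :=
    mul_ne_zero (by linarith) (Real.sqrt_pos.2 (by linarith)).ne'
  unfold tetrahedronIntegrand
  fun_prop (disch := exact hden)

theorem eventually_continuousAt_tetrahedronIntegrand :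
    ∀ᶠ t in 𝓝 0, ContinuousAt tetrahedronIntegrand t := by
  have : ∀ᶠ t : ℝ in 𝓝 0, t ^ 2 < 2 :=
    (continuous_pow 2).continuousAt.eventually_lt continuousAt_const (by norm_num)
  exact this.mono fun t ht => continuousAt_tetrahedronIntegrand ht

theorem tendsto_tetrahedronIntegrand_div_sq :
    Tendsto (fun t => tetrahedronIntegrand t / t ^ 2) (𝓝[>] 0) (𝓝 (1 / (3 * √2))) := by
  have harctan : Tendsto (fun t => arctan t / t) (𝓝[>] 0) (𝓝 1) := by
    simpa using (hasDerivAt_arctan' 0).tendsto_div_self_nhdsGT arctan_zero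
  have hden : Tendsto (fun t : ℝ => 1 / ((3 - t ^ 2) * √(2 - t ^ 2))) (𝓝[>] 0)
      (𝓝 (1 / (3 * √2))) := by
    have hc : ContinuousAt (fun t : ℝ => 1 / ((3 - t ^ 2) * √(2 - t ^ 2))) 0 := by
      fun_prop (disch := norm_num)
    simpa using hc.tendsto.mono_left nhdsWithin_le_nhds
  refine (harctan.mul hden).congr' ?_ |>.trans (by rw [one_mul])
  filter_upwards [self_mem_nhdsWithin] with t (ht : 0 < t)
  unfold tetrahedronIntegrand
  field_simp

theorem tendsto_const_div_atTop_nhdsGT_zero {b : ℝ} (hb : 0 < b) :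
    Tendsto (fun r => b / r) atTop (𝓝[>] 0) :=
  tendsto_nhdsWithin_iff.2 ⟨tendsto_const_nhds.div_atTop tendsto_id,
    eventually_gt_atTop 0 |>.mono fun _ hr => div_pos hb hr⟩

theorem tendsto_tan_nhdsGT_zero : Tendsto tan (𝓝[>] 0) (𝓝[>] 0) := by
  refine tendsto_nhdsWithin_iff.2 ⟨?_, ?_⟩
  · simpa using (continuousAt_tan.2 (by simp)).tendsto.mono_left (nhdsWithin_le_nhds (a := 0))
  · filter_upwards [Ioo_mem_nhdsGT (by positivity : (0 : ℝ) < π / 2)] with x hx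
    exact tan_pos_of_pos_of_lt_pi_div_two hx.1 hx.2

theorem tendsto_mul_tan_const_div_atTop {b : ℝ} (hb : 0 < b) :
    Tendsto (fun r => r * tan (b / r)) atTop (𝓝 b) := by
  have htan : Tendsto (fun x => tan x / x) (𝓝[>] 0) (𝓝 1) := by
    simpa using (hasDerivAt_tan (by simp : cos 0 ≠ 0)).tendsto_div_self_nhdsGT tan_zero
  refine ((htan.comp (tendsto_const_div_atTop_nhdsGT_zero hb)).const_mul b).congr' ?_
    |>.trans (by rw [mul_one])
  filter_upwards [eventually_gt_atTop 0] with r hr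
  simp only [Function.comp_apply]
  field_simp

theorem stmt_15 (a : ℝ) (ha : 0 < a) :
    Filter.Tendsto (fun r : ℝ =>
      12 * r ^ 3 * ∫ t in (0 : ℝ)..(Real.tan (a / (2 * r))),
        t * Real.arctan t / ((3 - t ^ 2) * Real.sqrt (2 - t ^ 2)))
      Filter.atTop (nhds (Real.sqrt 2 / 12 * a ^ 3)) := by
  simp only [← div_div]
  have hu := tendsto_tan_nhdsGT_zero.comp (tendsto_const_div_atTop_nhdsGT_zero (half_pos ha))
  have hratio := (tendsto_integral_div_pow_succ_nhdsGT 2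
    eventually_continuousAt_tetrahedronIntegrand tendsto_tetrahedronIntegrand_div_sq).comp hu
  have hlim := (((tendsto_mul_tan_const_div_atTop (half_pos ha)).pow 3).mul hratio).const_mul 12
  convert hlim.congr' ?_ using 2
  · field_simp
    norm_num
  · filter_upwards [hu.eventually self_mem_nhdsWithin] with r (hr : 0 < tan (a / 2 / r))
    simp only [Function.comp_apply, tetrahedronIntegrand]
    generalize tan (a / 2 / r) = u at hr ⊢
    field_simp
    ring
end
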